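/- For any α ∈ ℂ, the polynomials B_n^α(t) = (1/n!) ∑_{k=0}^n (ωt)_k (ω²t)_k (α+t)_{n−k} (α−t+k)_{n−k} / (k!(n−k)!) satisfy the 3-term recurrence ((n+α)³ − t³) B_n^α − (n+1)(2n² + 3n(α+1) + α² + 3α + 1) B_{n+1}^α + (n+2)²(n+1) B_{n+2}^α = 0, with B_0^α = 1 and B_1^α = α². -/

import Mathlib

open scoped BigOperators

/-- The Pochhammer symbol (rising factorial) (a)_n. -/
noncomputable def poch (a : ℂ) (n : ℕ) : ℂ := (ascPochhammer ℂ n).eval a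

/-- ω = e^{2πi/3}. -/
noncomputable def ω : ℂ := Complex.exp (2 * Real.pi * Complex.I / 3)

/-- The polynomials B_n^α(t). -/
noncomputable def Ba (α t : ℂ) (n : ℕ) : ℂ :=
  (1 / (Nat.factorial n : ℂ)) * ∑ k ∈ Finset.range (n + 1),
    poch (ω * t) k * poch (ω ^ 2 * t) k * poch (α + t) (n - k) * poch (α - t + k) (n - k)
      / ((Nat.factorial k : ℂ) * (Nat.factorial (n - k) : ℂ))

/-!
Creative telescoping. Write `T n k` for the `k`-th summand of `n! B_n^α(t)`. Zeilberger's
algorithm produces a certificate `G n k`, a polynomial multiple of a hypergeometric term, with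
`((n+α)³ - t³) T n k - (2n² + 3n(α+1) + α² + 3α + 1) T (n+1) k + (n+2) T (n+2) k
  = G n (k+1) - G n k` for `k < n`; the terms with `k = n, n+1, n+2` cancel `G n n`, and
`G n 0 = 0`. Summing over `k` gives the recurrence for `n! B_n^α(t)`. The cube roots of unity
only enter through `(ωt)_{k+1} (ω²t)_{k+1} = (ωt)_k (ω²t)_k (k² - kt + t²)`, a consequence of
`ω² + ω + 1 = 0`.
-/

open Finset
open scoped Nat

lemma poch_zero (a : ℂ) : poch a 0 = 1 := by
  simp [poch]

lemma poch_succ (a : ℂ) (n : ℕ) : poch a (n + 1) = poch a n * (a + n) :=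
  ascPochhammer_succ_eval n a

lemma poch_succ_left (a : ℂ) (n : ℕ) : poch a (n + 1) = a * poch (a + 1) n := by
  simp [poch, ascPochhammer_succ_left, Polynomial.eval_comp]

section Telescoping

variable (c : ℕ → ℂ) (α t : ℂ)

noncomputable def summand (n k : ℕ) : ℂ :=
  c k * poch (α + t) (n - k) * poch (α - t + k) (n - k) / (k ! * (n - k)!)

noncomputable def certificate (n k : ℕ) : ℂ :=
  k * (α + t - 1) * (n + α - t) * (k ^ 2 - (n + 1 + 2 * t) * k + (n + α + t) * (t + 1 - α)) *
    c k * poch (α + t) (n - k) * poch (α - t + k) (n - k) / (k ! * (n + 2 - k)!)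

variable {c α t}

lemma summand_recurrence_telescopes (hc : ∀ k : ℕ, c (k + 1) = c k * (k ^ 2 - k * t + t ^ 2))
    {n k : ℕ} (hk : k < n) :
    (((n : ℂ) + α) ^ 3 - t ^ 3) * summand c α t n k
      - (2 * (n : ℂ) ^ 2 + 3 * n * (α + 1) + α ^ 2 + 3 * α + 1) * summand c α t (n + 1) k
      + ((n : ℂ) + 2) * summand c α t (n + 2) k
      = certificate c α t n (k + 1) - certificate c α t n k := by
  -- every term is a polynomial multiple of `c k (α+t)_m (α-t+k+1)_m / (k! (m+3)!)`
  obtain ⟨m, rfl⟩ : ∃ m, n = k + m + 1 := ⟨n - k - 1, by omega⟩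
  have e0 : k + m + 1 - k = m + 1 := by omega
  have e1 : k + m + 1 + 1 - k = m + 2 := by omega
  have e2 : k + m + 1 + 2 - k = m + 3 := by omega
  have e3 : k + m + 1 - (k + 1) = m := by omega
  have e4 : k + m + 1 + 2 - (k + 1) = m + 2 := by omega
  simp only [summand, certificate, e0, e1, e2, e3, e4, hc]
  rw [poch_succ_left (α - t + k) (m + 2), poch_succ_left (α - t + k) (m + 1),
    poch_succ_left (α - t + k) m,
    show α - t + ((k + 1 : ℕ) : ℂ) = α - t + k + 1 by push_cast; ring]
  simp only [poch_succ]
  rw [Nat.factorial_succ k, Nat.factorial_succ (m + 2), Nat.factorial_succ (m + 1),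
    Nat.factorial_succ m]
  have hm2 := Nat.cast_add_one_ne_zero (R := ℂ) (m + 1)
  have hm3 := Nat.cast_add_one_ne_zero (R := ℂ) (m + 2)
  push_cast at hm2 hm3 ⊢
  field_simp
  ring

lemma summand_recurrence_boundary (hc : ∀ k : ℕ, c (k + 1) = c k * (k ^ 2 - k * t + t ^ 2))
    (n : ℕ) :
    certificate c α t n n + (((n : ℂ) + α) ^ 3 - t ^ 3) * summand c α t n n
      - (2 * (n : ℂ) ^ 2 + 3 * n * (α + 1) + α ^ 2 + 3 * α + 1) *
          (summand c α t (n + 1) n + summand c α t (n + 1) (n + 1))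
      + ((n : ℂ) + 2) * (summand c α t (n + 2) n + summand c α t (n + 2) (n + 1)
          + summand c α t (n + 2) (n + 2)) = 0 := by
  have e1 : n + 1 - n = 1 := by omega
  have e2 : n + 2 - n = 2 := by omega
  have e3 : n + 2 - (n + 1) = 1 := by omega
  simp only [summand, certificate, Nat.sub_self, e1, e2, e3, hc, poch_succ, poch_zero,
    Nat.factorial_succ, Nat.factorial_zero]
  have hn1 := Nat.cast_add_one_ne_zero (R := ℂ) n
  have hn2 := Nat.cast_add_one_ne_zero (R := ℂ) (n + 1)
  push_cast at hn1 hn2 ⊢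
  field_simp
  ring

lemma certificate_zero_right (n : ℕ) : certificate c α t n 0 = 0 := by
  simp [certificate]

theorem sum_summand_recurrence (hc : ∀ k : ℕ, c (k + 1) = c k * (k ^ 2 - k * t + t ^ 2))
    (n : ℕ) :
    (((n : ℂ) + α) ^ 3 - t ^ 3) * ∑ k ∈ range (n + 1), summand c α t n k
      - (2 * (n : ℂ) ^ 2 + 3 * n * (α + 1) + α ^ 2 + 3 * α + 1) *
          ∑ k ∈ range (n + 2), summand c α t (n + 1) k
      + ((n : ℂ) + 2) * ∑ k ∈ range (n + 3), summand c α t (n + 2) k = 0 := by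
  have htel : ∑ k ∈ range n, ((((n : ℂ) + α) ^ 3 - t ^ 3) * summand c α t n k
      - (2 * (n : ℂ) ^ 2 + 3 * n * (α + 1) + α ^ 2 + 3 * α + 1) * summand c α t (n + 1) k
      + ((n : ℂ) + 2) * summand c α t (n + 2) k) = certificate c α t n n := by
    rw [sum_congr rfl fun k hk ↦ summand_recurrence_telescopes hc (mem_range.mp hk),
      sum_range_sub, certificate_zero_right, sub_zero]
  rw [sum_add_distrib, sum_sub_distrib, ← mul_sum, ← mul_sum, ← mul_sum] at htel
  simp only [sum_range_succ]
  linear_combination htel + summand_recurrence_boundary hc n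

end Telescoping

lemma omega_sq_add_omega_add_one : ω ^ 2 + ω + 1 = 0 := by
  have hω : IsPrimitiveRoot ω 3 := by
    simpa [ω] using Complex.isPrimitiveRoot_exp 3 (by norm_num)
  have h := hω.geom_sum_eq_zero (by norm_num)
  rw [sum_range_succ, sum_range_succ, sum_range_one] at h
  linear_combination h

lemma poch_omega_mul_poch_omega_sq_mul_succ (t : ℂ) (k : ℕ) :
    poch (ω * t) (k + 1) * poch (ω ^ 2 * t) (k + 1) =
      poch (ω * t) k * poch (ω ^ 2 * t) k * (k ^ 2 - k * t + t ^ 2) := by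
  rw [poch_succ, poch_succ]
  linear_combination poch (ω * t) k * poch (ω ^ 2 * t) k * t * (t * (ω - 1) + k) *
    omega_sq_add_omega_add_one

lemma Ba_eq_sum_summand (α t : ℂ) (n : ℕ) :
    Ba α t n = (∑ k ∈ range (n + 1),
      summand (fun k ↦ poch (ω * t) k * poch (ω ^ 2 * t) k) α t n k) / n ! := by
  rw [Ba, one_div_mul_eq_div]
  rfl

theorem Ba_recurrence (α t : ℂ) :
    Ba α t 0 = 1 ∧ Ba α t 1 = α ^ 2 ∧
    ∀ n : ℕ,
      (((n : ℂ) + α) ^ 3 - t ^ 3) * Ba α t n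
        - ((n : ℂ) + 1) * (2 * (n : ℂ) ^ 2 + 3 * (n : ℂ) * (α + 1) + α ^ 2 + 3 * α + 1)
            * Ba α t (n + 1)
        + ((n : ℂ) + 2) ^ 2 * ((n : ℂ) + 1) * Ba α t (n + 2) = 0 := by
  have hc := poch_omega_mul_poch_omega_sq_mul_succ t
  refine ⟨by simp [Ba, poch_zero], ?_, fun n ↦ ?_⟩
  · have h1 := hc 0
    norm_num [Ba_eq_sum_summand, summand, sum_range_succ, poch_succ, poch_zero] at h1 ⊢
    linear_combination h1
  · have key := sum_summand_recurrence (c := fun k ↦ poch (ω * t) k * poch (ω ^ 2 * t) k)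
      (α := α) hc n
    rw [Ba_eq_sum_summand, Ba_eq_sum_summand, Ba_eq_sum_summand, Nat.factorial_succ (n + 1),
      Nat.factorial_succ n]
    generalize ∑ k ∈ range (n + 1), summand _ α t n k = S₀ at key ⊢
    generalize ∑ k ∈ range (n + 2), summand _ α t (n + 1) k = S₁ at key ⊢
    generalize ∑ k ∈ range (n + 3), summand _ α t (n + 2) k = S₂ at key ⊢
    have hn0 : (n ! : ℂ) ≠ 0 := Nat.cast_ne_zero.mpr n.factorial_ne_zero
    have hn1 := Nat.cast_add_one_ne_zero (R := ℂ) n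
    have hn2 := Nat.cast_add_one_ne_zero (R := ℂ) (n + 1)
    push_cast at hn1 hn2 ⊢
    field_simp
    linear_combination ((n : ℂ) + 2) * key
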